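/- For every positive integer n and every integer k with 0 ≤ k ≤ n, there exists a bijection Φ from RInc_k(2×n) to itself such that for every T ∈ RInc_k(2×n): (1) the second row of Φ(T) is identical to the second row of T, and (2) maj(Φ(T)) = amaj(T) + n − k. -/

import Mathlib

/-- Major index: sum of all `i` such that `i` appears in row 1 and `i+1` appears in row 2. -/
def maj {n : ℕ} (T : (Fin n → ℕ) × (Fin n → ℕ)) : ℕ :=
  ∑ i ∈ (Finset.image T.1 Finset.univ).filter (fun i => ∃ j, T.2 j = i + 1), i

/-- Amajor index: sum of all `i` such that `i` appears in row 2 and `i+1` appears in row 1. -/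
def amaj {n : ℕ} (T : (Fin n → ℕ) × (Fin n → ℕ)) : ℕ :=
  ∑ i ∈ (Finset.image T.2 Finset.univ).filter (fun i => ∃ j, T.1 j = i + 1), i

/-- Row-increasing tableaux of shape 2×n with entry set `{1, …, 2n−k}`:
rows strictly increasing, columns weakly increasing. -/
def RInc (n k : ℕ) : Set ((Fin n → ℕ) × (Fin n → ℕ)) :=
  {T | StrictMono T.1 ∧ StrictMono T.2 ∧ (∀ i, T.1 i ≤ T.2 i) ∧
    Set.range T.1 ∪ Set.range T.2 = Set.Icc 1 (2 * n - k)}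

/-!
Write `A` and `B` for the entry sets of the two rows. `Φ` keeps `B` and replaces `A` by
`(A \ B) ∪ rotate B (A ∩ B)`, where `rotate B` shifts every element one step down inside its
maximal run of consecutive integers of `B`, the least element of a run wrapping around to the top.

A descent `i` of `Φ T` with `i ∈ B` is, through the rotation, an ascent `i` of `T` with
`i + 1 ∈ A ∩ B`. The remaining descents of `Φ T` are the last elements of the runs of `A \ B`,
the remaining ascents of `T` are the predecessors of their first elements, and summing run
lengths gives `maj (Φ T) - amaj T = #(A \ B) = n - k`.

The column condition is the ballot condition `#{b ∈ B | b ≤ m} ≤ #{a ∈ A | a ≤ m}`. Rotating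
`A ∩ B` lowers the right-hand side by at most one, and only when `m, m + 1` lie in one run of `B`
and `m + 1 ∉ A`; there the ballot condition at `m + 1` has room to spare. Finally the rotation
is invertible, so `Φ` is injective, hence bijective on the finite set `RInc n k`.
-/

open Finset

namespace RInc

def countLE (F : Finset ℕ) (m : ℕ) : ℕ := #{x ∈ F | x ≤ m}

lemma countLE_zero (F : Finset ℕ) : countLE F 0 = if 0 ∈ F then 1 else 0 := by
  rw [countLE, filter_congr (q := (· = 0)) (by simp), filter_eq']
  split_ifs <;> simp

lemma countLE_add_one (F : Finset ℕ) (m : ℕ) :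
    countLE F (m + 1) = countLE F m + if m + 1 ∈ F then 1 else 0 := by
  have : {x ∈ F | x ≤ m + 1} = {x ∈ F | x ≤ m} ∪ {x ∈ F | x = m + 1} := by
    rw [← filter_or]; exact filter_congr (by omega)
  rw [countLE, countLE, this,
    card_union_of_disjoint (disjoint_filter.2 fun x _ h₁ h₂ => by omega), filter_eq']
  split_ifs <;> simp

lemma countLE_union {F G : Finset ℕ} (h : Disjoint F G) (m : ℕ) :
    countLE (F ∪ G) m = countLE F m + countLE G m := by
  rw [countLE, filter_union, card_union_of_disjoint (disjoint_filter_filter h)]; rfl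

lemma countLE_eq_card {F : Finset ℕ} {m : ℕ} (h : ∀ x ∈ F, x ≤ m) : countLE F m = #F := by
  rw [countLE, filter_true_of_mem h]

/-- For `i ∈ B`, the least element of the run of consecutive integers of `B` containing `i`. -/
def blockStart (B : Finset ℕ) : ℕ → ℕ
  | 0 => 0
  | i + 1 => if i ∈ B then blockStart B i else i + 1

def cycSucc (B : Finset ℕ) (i : ℕ) : ℕ := if i + 1 ∈ B then i + 1 else blockStart B i

def rotate (B S : Finset ℕ) : Finset ℕ := {i ∈ B | cycSucc B i ∈ S}

variable {B S : Finset ℕ}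

@[simp] lemma mem_rotate {i : ℕ} : i ∈ rotate B S ↔ i ∈ B ∧ cycSucc B i ∈ S := mem_filter

lemma rotate_subset : rotate B S ⊆ B := filter_subset _ _

lemma countLE_rotate_add (hS : S ⊆ B) (m : ℕ) :
    countLE (rotate B S) m + (if m ∈ B ∧ m + 1 ∈ B ∧ blockStart B m ∈ S then 1 else 0)
      = countLE S m + if m ∈ B ∧ m + 1 ∈ B ∧ m + 1 ∈ S then 1 else 0 := by
  induction m with
  | zero =>
    have := @hS 0
    simp only [countLE_zero, mem_rotate, cycSucc, blockStart]
    by_cases h0 : 0 ∈ B <;> by_cases h1 : 1 ∈ B <;> by_cases h0S : 0 ∈ S <;>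
      by_cases h1S : 1 ∈ S <;> simp_all
  | succ m ih =>
    have := @hS (m + 1)
    simp only [countLE_add_one, mem_rotate, cycSucc, blockStart] at ih ⊢
    by_cases h0 : m ∈ B <;> by_cases h1 : m + 1 ∈ B <;> by_cases h2 : m + 1 + 1 ∈ B <;>
      by_cases h1S : m + 1 ∈ S <;> by_cases h2S : m + 1 + 1 ∈ S <;>
      by_cases hbS : blockStart B m ∈ S <;> simp_all

lemma card_rotate (hS : S ⊆ B) : #(rotate B S) = #S := by
  have hB : ∀ x ∈ B, x ≤ B.sup id := fun x hx => le_sup (f := id) hx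
  have hB' : B.sup id + 1 ∉ B := fun h => by have := hB _ h; omega
  simpa [hB', countLE_eq_card fun x hx => hB x (rotate_subset hx),
    countLE_eq_card fun x hx => hB x (hS hx)] using countLE_rotate_add hS (B.sup id)

lemma exists_blockEnd {j : ℕ} (hj : j ∈ B) :
    ∃ e ∈ B, e + 1 ∉ B ∧ blockStart B e = blockStart B j := by
  by_cases h : j + 1 ∈ B
  · obtain ⟨e, he, he1, hbs⟩ := exists_blockEnd h
    exact ⟨e, he, he1, by rw [hbs, blockStart, if_pos hj]⟩
  · exact ⟨j, hj, h, rfl⟩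
termination_by B.sup id + 1 - j
decreasing_by have := le_sup (f := id) h; simp only [id] at this; omega

lemma exists_cycSucc_eq {i : ℕ} (hi : i ∈ B) : ∃ j ∈ B, cycSucc B j = i := by
  have hstart : blockStart B i = i ∨ ∃ j, j ∈ B ∧ j + 1 = i := by
    cases i with
    | zero => exact Or.inl rfl
    | succ j => by_cases hj : j ∈ B <;> simp [blockStart, hj]
  obtain hstart | ⟨j, hj, rfl⟩ := hstart
  · obtain ⟨e, he, he1, hbs⟩ := exists_blockEnd hi
    exact ⟨e, he, by rw [cycSucc, if_neg he1, hbs, hstart]⟩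
  · exact ⟨j, hj, if_pos hi⟩

lemma image_cycSucc_rotate (hS : S ⊆ B) : (rotate B S).image (cycSucc B) = S := by
  ext i
  simp only [mem_image, mem_rotate]
  constructor
  · rintro ⟨j, ⟨-, hj⟩, rfl⟩
    exact hj
  · intro hi
    obtain ⟨j, hj, rfl⟩ := exists_cycSucc_eq (hS hi)
    exact ⟨j, ⟨hj, hi⟩, rfl⟩

lemma rotate_injOn : Set.InjOn (rotate B) {S | S ⊆ B} := fun S hS S' hS' h => by
  rw [← image_cycSucc_rotate hS, h, image_cycSucc_rotate hS']

def phiTop (A B : Finset ℕ) : Finset ℕ := (A \ B) ∪ rotate B (A ∩ B)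

variable {A : Finset ℕ}

lemma disjoint_sdiff_rotate : Disjoint (A \ B) (rotate B S) :=
  disjoint_of_subset_right rotate_subset sdiff_disjoint

lemma phiTop_union : phiTop A B ∪ B = A ∪ B := by
  rw [phiTop, union_assoc, union_eq_right.mpr rotate_subset, sdiff_union_self_eq_union]

lemma card_phiTop : #(phiTop A B) = #A := by
  rw [phiTop, card_union_of_disjoint disjoint_sdiff_rotate, card_rotate inter_subset_right,
    card_sdiff_add_card_inter]

lemma phiTop_sdiff : phiTop A B \ B = A \ B := by
  rw [phiTop, union_sdiff_distrib, Finset.sdiff_idem,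
    sdiff_eq_empty_iff_subset.mpr rotate_subset, union_empty]

lemma phiTop_inter : phiTop A B ∩ B = rotate B (A ∩ B) := by
  rw [phiTop, union_inter_distrib_right, sdiff_inter_self, empty_union,
    inter_eq_left.mpr rotate_subset]

lemma phiTop_left_injective : Function.Injective fun A => phiTop A B := fun A A' h => by
  have hS : A ∩ B = A' ∩ B :=
    rotate_injOn inter_subset_right inter_subset_right <| by
      simpa only [phiTop_inter] using congrArg (· ∩ B) h
  have hC : A \ B = A' \ B := by simpa only [phiTop_sdiff] using congrArg (· \ B) h
  rw [← sdiff_union_inter A B, ← sdiff_union_inter A' B, hS, hC]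

lemma countLE_le_countLE_phiTop (h : ∀ m, countLE B m ≤ countLE A m) (m : ℕ) :
    countLE B m ≤ countLE (phiTop A B) m := by
  have hA := countLE_union (disjoint_sdiff_inter A B) m
  rw [sdiff_union_inter] at hA
  rw [phiTop, countLE_union disjoint_sdiff_rotate]
  have hrot := countLE_rotate_add (inter_subset_right (s₁ := A) (s₂ := B)) m
  have hm := h m
  have hm1 := h (m + 1)
  rw [countLE_add_one, countLE_add_one] at hm1
  -- `hrot` loses one only if `m + 1 ∈ B \ A`, and then `hm1` gives `countLE B m < countLE A m`.
  split_ifs at hrot hm1 <;> simp_all <;> omega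

def descents (X Y : Finset ℕ) : Finset ℕ := {i ∈ X | i + 1 ∈ Y}

lemma sum_descents_union_left {X X' Y : Finset ℕ} (h : Disjoint X X') :
    ∑ i ∈ descents (X ∪ X') Y, i = ∑ i ∈ descents X Y, i + ∑ i ∈ descents X' Y, i := by
  rw [descents, filter_union, sum_union (disjoint_filter_filter h)]; rfl

lemma sum_descents_union_right {X Y Y' : Finset ℕ} (h : Disjoint Y Y') :
    ∑ i ∈ descents X (Y ∪ Y'), i = ∑ i ∈ descents X Y, i + ∑ i ∈ descents X Y', i := by
  rw [descents, filter_congr (q := fun i => i + 1 ∈ Y ∨ i + 1 ∈ Y') (by simp), filter_or,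
    sum_union (disjoint_filter.2 fun i _ h₁ h₂ => disjoint_left.1 h h₁ h₂)]; rfl

lemma descents_rotate_left (hS : S ⊆ B) : descents (rotate B S) B = descents B S := by
  ext i
  simp only [descents, mem_filter, mem_rotate, cycSucc]
  by_cases h : i + 1 ∈ B
  · simp [h]
  · simp only [h, and_false, false_iff, not_and]
    exact fun _ hS' => h (hS hS')

lemma sum_runEnds_eq (C : Finset ℕ) (h0 : 0 ∉ C) :
    ∑ i ∈ C with i + 1 ∉ C, i = ∑ j ∈ C with j - 1 ∉ C, (j - 1) + #C := by
  have hpos : ∀ j ∈ C, 1 ≤ j := fun j hj => Nat.one_le_iff_ne_zero.2 fun h => h0 (h ▸ hj)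
  have hinner : ∑ i ∈ C with i + 1 ∈ C, i = ∑ j ∈ C with j - 1 ∈ C, (j - 1) :=
    sum_nbij' (· + 1) (· - 1) (by simp +contextual) (fun j hj => by
      simp only [mem_filter] at hj ⊢
      rwa [Nat.sub_add_cancel (hpos j hj.1), and_comm])
      (by simp) (fun j hj => Nat.sub_add_cancel (hpos j (mem_filter.1 hj).1)) (by simp)
  have htotal : ∑ j ∈ C, j = ∑ j ∈ C, (j - 1) + #C := by
    rw [card_eq_sum_ones, ← sum_add_distrib]
    exact sum_congr rfl fun j hj => (Nat.sub_add_cancel (hpos j hj)).symm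
  have hsplit := sum_filter_add_sum_filter_not C (· + 1 ∈ C) id
  have hsplit' := sum_filter_add_sum_filter_not C (· - 1 ∈ C) (· - 1)
  simp only [id] at hsplit
  omega

lemma sum_descents_sdiff {N : ℕ} (hU : A ∪ B = Icc 1 N) (hN : N ∉ A \ B) :
    ∑ i ∈ descents (A \ B) B, i = ∑ i ∈ descents B (A \ B), i + #(A \ B) := by
  have hC : A \ B ⊆ Icc 1 N := hU ▸ sdiff_subset.trans subset_union_left
  have hB : ∀ j ∈ Icc 1 N, j ∈ B ↔ j ∉ A \ B := by
    intro j hj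
    rw [← hU, mem_union] at hj
    rw [mem_sdiff]
    tauto
  have hends : descents (A \ B) B = {i ∈ A \ B | i + 1 ∉ A \ B} := by
    refine filter_congr fun i hi => hB _ ?_
    have := mem_Icc.1 (hC hi)
    have : i ≠ N := fun h => hN (h ▸ hi)
    exact mem_Icc.2 (by omega)
  have hstarts : ∑ i ∈ descents B (A \ B), i = ∑ j ∈ A \ B with j - 1 ∉ A \ B, (j - 1) := by
    refine sum_bij_ne_zero (fun i _ _ => i + 1) (fun i hi _ => ?_) (fun _ _ _ _ _ _ => by omega)
      (fun j hj hj0 => ?_) (fun _ _ _ => rfl)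
    · simp only [descents, mem_filter, mem_sdiff, add_tsub_cancel_right] at hi ⊢
      tauto
    · obtain ⟨hjC, hj⟩ := mem_filter.1 hj
      have := mem_Icc.1 (hC hjC)
      have hj1 : j - 1 + 1 = j := by omega
      refine ⟨j - 1, ?_, hj0, hj1⟩
      rw [descents, mem_filter, hj1]
      exact ⟨(hB _ (mem_Icc.2 (by omega))).2 hj, hjC⟩
  rw [hends, hstarts]
  exact sum_runEnds_eq _ fun h => by simpa using hC h

lemma sum_descents_phiTop {N : ℕ} (hU : A ∪ B = Icc 1 N) (hN : N ∉ A \ B) :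
    ∑ i ∈ descents (phiTop A B) B, i = ∑ i ∈ descents B A, i + #(A \ B) := by
  have hA := sum_descents_union_right (X := B) (disjoint_sdiff_inter A B)
  rw [sdiff_union_inter] at hA
  rw [phiTop, sum_descents_union_left disjoint_sdiff_rotate,
    descents_rotate_left inter_subset_right, hA, sum_descents_sdiff hU hN]
  ring

section Tableau

variable {n k : ℕ}

def entries (f : Fin n → ℕ) : Finset ℕ := univ.image f

lemma coe_entries (f : Fin n → ℕ) : (entries f : Set ℕ) = Set.range f := by
  simp [entries]

lemma card_entries {f : Fin n → ℕ} (hf : Function.Injective f) : #(entries f) = n := by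
  rw [entries, card_image_of_injective _ hf, card_univ, Fintype.card_fin]

lemma countLE_entries {f : Fin n → ℕ} (hf : Function.Injective f) (m : ℕ) :
    countLE (entries f) m = #{j | f j ≤ m} := by
  rw [countLE, entries, filter_image, card_image_of_injective _ hf]

lemma lt_card_filter_le_iff {f : Fin n → ℕ} (hf : StrictMono f) (i : Fin n) (m : ℕ) :
    (i : ℕ) < #{j | f j ≤ m} ↔ f i ≤ m := by
  constructor
  · intro h
    by_contra! hlt
    have : ({j | f j ≤ m} : Finset (Fin n)) ⊆ Iio i := fun j hj =>
      mem_Iio.2 (hf.lt_iff_lt.1 ((mem_filter.1 hj).2.trans_lt hlt))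
    simpa using (card_le_card this).trans_lt' h
  · intro h
    have : Iic i ⊆ ({j | f j ≤ m} : Finset (Fin n)) := fun j hj =>
      mem_filter.2 ⟨mem_univ j, (hf.monotone (mem_Iic.1 hj)).trans h⟩
    simpa using (card_le_card this)

lemma forall_le_iff_countLE_le {a b : Fin n → ℕ} (ha : StrictMono a) (hb : StrictMono b) :
    (∀ i, a i ≤ b i) ↔ ∀ m, countLE (entries b) m ≤ countLE (entries a) m := by
  simp only [countLE_entries ha.injective, countLE_entries hb.injective]
  refine ⟨fun h m => card_le_card fun j => ?_, fun h i => ?_⟩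
  · simp only [mem_filter, mem_univ, true_and]
    exact (h j).trans
  · exact (lt_card_filter_le_iff ha i _).1
      (((lt_card_filter_le_iff hb i _).2 le_rfl).trans_le (h _))

lemma mem_RInc_iff {T : (Fin n → ℕ) × (Fin n → ℕ)} :
    T ∈ RInc n k ↔ StrictMono T.1 ∧ StrictMono T.2 ∧
      (∀ m, countLE (entries T.2) m ≤ countLE (entries T.1) m) ∧
      entries T.1 ∪ entries T.2 = Icc 1 (2 * n - k) := by
  have hU : Set.range T.1 ∪ Set.range T.2 = Set.Icc 1 (2 * n - k) ↔
      entries T.1 ∪ entries T.2 = Icc 1 (2 * n - k) := by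
    rw [← coe_inj, coe_union, coe_entries, coe_entries, coe_Icc]
  simp only [RInc, Set.mem_ofPred_eq, hU]
  exact ⟨fun ⟨h₁, h₂, h₃, h₄⟩ => ⟨h₁, h₂, (forall_le_iff_countLE_le h₁ h₂).1 h₃, h₄⟩,
    fun ⟨h₁, h₂, h₃, h₄⟩ => ⟨h₁, h₂, (forall_le_iff_countLE_le h₁ h₂).2 h₃, h₄⟩⟩

variable {T : (Fin n → ℕ) × (Fin n → ℕ)}

lemma notMem_entries_sdiff (hT : T ∈ RInc n k) : 2 * n - k ∉ entries T.1 \ entries T.2 := by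
  simp only [mem_sdiff, entries, mem_image, mem_univ, true_and, not_exists]
  rintro ⟨⟨j, hj⟩, hN⟩
  have hbj : T.2 j ∈ Set.Icc 1 (2 * n - k) := hT.2.2.2 ▸ Or.inr ⟨j, rfl⟩
  exact hN j (le_antisymm hbj.2 (hj ▸ hT.2.2.1 j))

lemma card_entries_sdiff (hT : T ∈ RInc n k) : #(entries T.1 \ entries T.2) = n - k := by
  have h := card_union_of_disjoint (sdiff_disjoint (s := entries T.2) (t := entries T.1))
  rw [sdiff_union_self_eq_union, (mem_RInc_iff.1 hT).2.2.2, Nat.card_Icc,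
    card_entries hT.2.1.injective] at h
  omega

lemma maj_eq_sum_descents (T : (Fin n → ℕ) × (Fin n → ℕ)) :
    maj T = ∑ i ∈ descents (entries T.1) (entries T.2), i := by
  simp [maj, descents, entries]

lemma amaj_eq_sum_descents (T : (Fin n → ℕ) × (Fin n → ℕ)) :
    amaj T = ∑ i ∈ descents (entries T.2) (entries T.1), i := by
  simp [amaj, descents, entries]

lemma finite_RInc : (RInc n k).Finite := by
  have hbox := Set.Finite.pi (ι := Fin n) fun _ => Set.finite_Icc 1 (2 * n - k)
  refine (hbox.prod hbox).subset fun T hT => ⟨fun i _ => ?_, fun i _ => ?_⟩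
  · exact hT.2.2.2 ▸ Or.inl ⟨i, rfl⟩
  · exact hT.2.2.2 ▸ Or.inr ⟨i, rfl⟩

/-- The fallback `T` is never used on `RInc n k`, where `card_phiTop` applies. -/
noncomputable def phi (T : (Fin n → ℕ) × (Fin n → ℕ)) : (Fin n → ℕ) × (Fin n → ℕ) :=
  if h : #(phiTop (entries T.1) (entries T.2)) = n then
    ((phiTop (entries T.1) (entries T.2)).orderEmbOfFin h, T.2)
  else T

lemma phi_snd (T : (Fin n → ℕ) × (Fin n → ℕ)) : (phi T).2 = T.2 := by
  unfold phi; split_ifs <;> rfl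

lemma phi_fst (hT : Function.Injective T.1) :
    (phi T).1 = (phiTop (entries T.1) (entries T.2)).orderEmbOfFin
      (card_phiTop.trans (card_entries hT)) := by
  rw [phi, dif_pos]

lemma strictMono_phi_fst (hT : Function.Injective T.1) : StrictMono (phi T).1 := by
  rw [phi_fst hT]
  exact OrderEmbedding.strictMono _

lemma entries_phi_fst (hT : Function.Injective T.1) :
    entries (phi T).1 = phiTop (entries T.1) (entries T.2) := by
  rw [phi_fst hT]
  exact coe_injective (by rw [coe_entries, range_orderEmbOfFin])

lemma phi_mem (hT : T ∈ RInc n k) : phi T ∈ RInc n k := by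
  obtain ⟨h₁, h₂, hcount, hU⟩ := mem_RInc_iff.1 hT
  refine mem_RInc_iff.2 ⟨strictMono_phi_fst h₁.injective, phi_snd T ▸ h₂, ?_, ?_⟩ <;>
    rw [entries_phi_fst h₁.injective, phi_snd]
  · exact countLE_le_countLE_phiTop hcount
  · rw [phiTop_union, hU]

lemma maj_phi (hT : T ∈ RInc n k) : maj (phi T) = amaj T + (n - k) := by
  rw [maj_eq_sum_descents, amaj_eq_sum_descents, entries_phi_fst hT.1.injective, phi_snd,
    sum_descents_phiTop (mem_RInc_iff.1 hT).2.2.2 (notMem_entries_sdiff hT),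
    card_entries_sdiff hT]

lemma phi_injOn : Set.InjOn phi (RInc n k) := fun T hT T' hT' h => by
  have h₂ : T.2 = T'.2 := by rw [← phi_snd T, h, phi_snd]
  have hnew := congrArg (fun T => entries T.1) h
  simp only [entries_phi_fst hT.1.injective, entries_phi_fst hT'.1.injective, h₂] at hnew
  have h₁ : Set.range T.1 = Set.range T'.1 := by
    rw [← coe_entries, ← coe_entries, phiTop_left_injective hnew]
  exact Prod.ext ((hT.1.range_inj hT'.1).1 h₁) h₂

end Tableau

end RInc

theorem phi_bijection_general (n k : ℕ) :
    ∃ Φ : ((Fin n → ℕ) × (Fin n → ℕ)) → ((Fin n → ℕ) × (Fin n → ℕ)),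
      Set.BijOn Φ (RInc n k) (RInc n k) ∧
      ∀ T ∈ RInc n k, (Φ T).2 = T.2 ∧ maj (Φ T) = amaj T + (n - k) :=
  ⟨RInc.phi,
    (RInc.finite_RInc.injOn_iff_bijOn_of_mapsTo fun _ => RInc.phi_mem).1 RInc.phi_injOn,
    fun _ hT => ⟨RInc.phi_snd _, RInc.maj_phi hT⟩⟩

/-- There is a bijection Φ of RInc_k(2×n) onto itself preserving the second row,
with maj(Φ(T)) = amaj(T) + n − k for every T ∈ RInc_k(2×n). -/
theorem phi_bijection (n k : ℕ) (hn : 1 ≤ n) (hk : k ≤ n) :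
    ∃ Φ : ((Fin n → ℕ) × (Fin n → ℕ)) → ((Fin n → ℕ) × (Fin n → ℕ)),
      Set.BijOn Φ (RInc n k) (RInc n k) ∧
      ∀ T ∈ RInc n k, (Φ T).2 = T.2 ∧ maj (Φ T) = amaj T + (n - k) :=
  phi_bijection_general n k
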